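/- Let n ∈ ℕ, χ > 0, p, q ≥ 1, m > 0, λ ∈ [1/3,1], K > 0, T > 0, and B₀ ∈ (0,1) with K√B₀ < Rⁿ and B₀ ≤ K²/(16(a_λ + b_λ)²). If B ∈ C¹([0,T)) is positive and nonincreasing with B(0) ≤ B₀ and B′(t) ≥ −[a_λ^{q−1}(nm)^q χ K / (2(a_λ + b_λ)(K² + a_λ Rⁿ)^{q−1} ω_n^q Rⁿ √(1 + K^{2/n−2} m²/ω_n²))] · B(t)^{1−1/(2n)} for all t ∈ (0,T), then (𝒫 w_out)(s,t) ≤ 0 for all t ∈ (0,T) and all s ∈ (K√(B(t)), Rⁿ). -/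

import Mathlib

open Real Set

/-- `a_λ := (1-λ)²/(2λ)`. -/
noncomputable def aL (l : ℝ) : ℝ := (1 - l) ^ 2 / (2 * l)

/-- `b_λ := (3λ-1)/(2λ)`. -/
noncomputable def bL (l : ℝ) : ℝ := (3 * l - 1) / (2 * l)

/-- `ω_n`, the `(n-1)`-dimensional measure of the unit sphere in `ℝⁿ`,
equals `n` times the volume of the unit ball. -/
noncomputable def omegaN (n : ℕ) : ℝ :=
  (n : ℝ) * (MeasureTheory.volume (Metric.ball (0 : EuclideanSpace ℝ (Fin n)) 1)).toReal

/-- The comparison profile `φ`. -/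
noncomputable def phi (l d ξ : ℝ) : ℝ :=
  if ξ < 1 then (2 * l / (d * Real.exp d)) * (Real.exp (d * ξ) - 1)
  else 1 - aL l / (ξ - bL l)

/-- The derivative `φ'`. -/
noncomputable def phiD (l d ξ : ℝ) : ℝ :=
  if ξ < 1 then 2 * l * Real.exp (d * (ξ - 1)) else aL l / (ξ - bL l) ^ 2

/-- The second derivative `φ''`. -/
noncomputable def phiDD (l d ξ : ℝ) : ℝ :=
  if ξ < 1 then 2 * d * l * Real.exp (d * (ξ - 1)) else -2 * aL l / (ξ - bL l) ^ 3

/-- `N(t)`. -/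
noncomputable def Nf (l R K : ℝ) (n : ℕ) (B : ℝ → ℝ) (t : ℝ) : ℝ :=
  K ^ 2 + aL l * R ^ n - (aL l + bL l) * (2 * K * Real.sqrt (B t) - bL l * B t)

/-- `A(t)`. -/
noncomputable def Af (m ωn l R K : ℝ) (n : ℕ) (B : ℝ → ℝ) (t : ℝ) : ℝ :=
  (m / ωn) * (K ^ 2 - 2 * bL l * K * Real.sqrt (B t) + (bL l) ^ 2 * B t) / Nf l R K n B t

/-- `D(t)`. -/
noncomputable def Df (m ωn l R K : ℝ) (n : ℕ) (B : ℝ → ℝ) (t : ℝ) : ℝ :=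
  (m / ωn) * aL l / Nf l R K n B t

/-- `E(t) := m/ω_n - Rⁿ D(t)`. -/
noncomputable def Ef (m ωn l R K : ℝ) (n : ℕ) (B : ℝ → ℝ) (t : ℝ) : ℝ :=
  m / ωn - R ^ n * Df m ωn l R K n B t

/-- `A_T := (m/ω_n)·1/(1 + a_λ Rⁿ/K²)`. -/
noncomputable def AT (m ωn l R K : ℝ) (n : ℕ) : ℝ :=
  (m / ωn) * (1 / (1 + aL l * R ^ n / K ^ 2))

/-- The parabolic operator `𝒫`. -/
noncomputable def Pop (n : ℕ) (χ p q μ : ℝ) (w : ℝ → ℝ → ℝ) (s t : ℝ) : ℝ :=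
  deriv (fun τ => w s τ) t
    - (n : ℝ) ^ (p + 1) * (s ^ (2 - 2 / (n : ℝ)) * (deriv (fun σ => w σ t) s) ^ p
        * deriv (deriv (fun σ => w σ t)) s)
      / Real.sqrt ((deriv (fun σ => w σ t) s) ^ 2
        + (n : ℝ) ^ 2 * s ^ (2 - 2 / (n : ℝ)) * (deriv (deriv (fun σ => w σ t)) s) ^ 2)
    - (n : ℝ) ^ q * χ * ((w s t - (μ / (n : ℝ)) * s) * (deriv (fun σ => w σ t) s) ^ q)
      / Real.sqrt (1 + s ^ (2 / (n : ℝ) - 2) * (w s t - (μ / (n : ℝ)) * s) ^ 2)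

/-- `J₁(s,t)`. -/
noncomputable def J1 (n : ℕ) (p m ωn l R K d : ℝ) (B : ℝ → ℝ) (s t : ℝ) : ℝ :=
  -(n : ℝ) ^ (p + 1) * ((s / B t) ^ (2 - 2 / (n : ℝ)) * phiDD l d (s / B t))
    / Real.sqrt ((B t) ^ (4 / (n : ℝ) - 2) * (phiD l d (s / B t)) ^ 2
        + (n : ℝ) ^ 2 * (B t) ^ (2 / (n : ℝ) - 2) * (s / B t) ^ (2 - 2 / (n : ℝ))
          * (phiDD l d (s / B t)) ^ 2)
    * (Af m ωn l R K n B t * phiD l d (s / B t) / B t) ^ (p - 1)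

/-- `J₂(s,t)`. -/
noncomputable def J2 (n : ℕ) (q χ m ωn l R K d μ : ℝ) (B : ℝ → ℝ) (s t : ℝ) : ℝ :=
  -(n : ℝ) ^ q * χ
      * (Af m ωn l R K n B t * phi l d (s / B t) - (μ / (n : ℝ)) * B t * (s / B t))
    / Real.sqrt (1 + (B t) ^ (2 / (n : ℝ) - 2) * (s / B t) ^ (2 / (n : ℝ) - 2)
        * (Af m ωn l R K n B t * phi l d (s / B t) - (μ / (n : ℝ)) * B t * (s / B t)) ^ 2)
    * (Af m ωn l R K n B t * phiD l d (s / B t) / B t) ^ (q - 1)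

/-!
Since `w_out` is affine in `s`, the diffusion term of `𝒫` vanishes, and since `w_out(Rⁿ, t) = m/ω_n`
we have `w_out - (μ/n)s = (Rⁿ - s)(m/(ω_n Rⁿ) - D)`, so `𝒫 w_out = (Rⁿ - s)(-D' - taxis term)`.
As `D = (m/ω_n) a_λ / N`, `-D' = (m/ω_n) a_λ N'/N²` with `N' = -(a_λ + b_λ)(K/√B - b_λ) B'`, and the
assumed lower bound on `B'` bounds this by a multiple of `B^{(1 - 1/n)/2}`. The smallness
`4(a_λ + b_λ)√B ≤ K` pins `N` between `K²/2 + a_λ Rⁿ` and `K² + a_λ Rⁿ`, and `s ≥ K√B` bounds the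
square root in the taxis term by `√(1 + K^{2/n-2}(m/ω_n)²) / B^{(1 - 1/n)/2}`; the constant in the
bound on `B'` is exactly what makes the two sides comparable.
-/

theorem four_mul_sqrt_le {k y K : ℝ} (hk : 0 < k) (hK : 0 ≤ K) (hy : y ≤ K ^ 2 / (16 * k ^ 2)) :
    4 * k * √y ≤ K := by
  rw [← le_div_iff₀' (by positivity), Real.sqrt_le_left (by positivity)]
  calc y ≤ K ^ 2 / (16 * k ^ 2) := hy
    _ = (K / (4 * k)) ^ 2 := by field_simp; ring

theorem sq_mul_sub_le_sq {ρ s c d : ℝ} (hρ : 0 < ρ) (hs : 0 ≤ s) (hsρ : s ≤ ρ) (hd : 0 ≤ d)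
    (hdc : 0 ≤ c / ρ - d) : ((ρ - s) * (c / ρ - d)) ^ 2 ≤ c ^ 2 := by
  have hW : (ρ - s) * (c / ρ - d) ≤ ρ * (c / ρ) :=
    mul_le_mul (by linarith) (by linarith) (by linarith) hρ.le
  rw [mul_div_cancel₀ _ hρ.ne'] at hW
  exact pow_le_pow_left₀ (mul_nonneg (by linarith) (by linarith)) hW 2

theorem le_div_sub_mul_div {a c K ρ N : ℝ} (hc : 0 ≤ c) (hρ : 0 < ρ) (hN : 0 < N)
    (hNlo : K ^ 2 / 2 + a * ρ ≤ N) : c * K ^ 2 / (2 * ρ * N) ≤ c / ρ - c * a / N := by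
  rw [div_sub_div _ _ hρ.ne' hN.ne', div_le_div_iff₀ (by positivity) (by positivity)]
  have : c * K ^ 2 ≤ c * (N - a * ρ) * 2 := by nlinarith
  nlinarith [mul_le_mul_of_nonneg_right this (by positivity : 0 ≤ ρ * N)]

theorem rpow_eq_sqrt_mul_sqrt_rpow {y : ℝ} (hy : 0 < y) (e : ℝ) :
    y ^ (1 - 1 / (2 * e)) = √y * √y ^ (1 - 1 / e) := by
  rw [Real.sqrt_eq_rpow, ← Real.rpow_mul hy.le, ← Real.rpow_add hy]
  ring_nf

theorem sqrt_one_add_rpow_mul_sq_le {n : ℕ} (hn : 0 < n) {s x K W c : ℝ} (hx : 0 < x)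
    (hx1 : x ≤ 1) (hK : 0 < K) (hs : K * x ≤ s) (hW : W ^ 2 ≤ c ^ 2) :
    √(1 + s ^ (2 / (n : ℝ) - 2) * W ^ 2)
      ≤ √(1 + K ^ (2 / (n : ℝ) - 2) * c ^ 2) / x ^ (1 - 1 / (n : ℝ)) := by
  have hn1 : (1 : ℝ) ≤ n := Nat.one_le_cast.2 hn
  have he : 2 / (n : ℝ) - 2 ≤ 0 := by
    have : 2 / (n : ℝ) ≤ 2 := div_le_self zero_le_two hn1
    linarith
  set P := x ^ (1 - 1 / (n : ℝ))
  have hP : 0 < P := Real.rpow_pos_of_pos hx _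
  have hP1 : P ≤ 1 := Real.rpow_le_one hx.le hx1 (by
    have : 1 / (n : ℝ) ≤ 1 := div_le_one_of_le₀ hn1 (by positivity)
    linarith)
  have hxe : x ^ (2 / (n : ℝ) - 2) = (P ^ 2)⁻¹ := by
    rw [show 2 / (n : ℝ) - 2 = (1 - 1 / n) * (-2 : ℝ) by ring, Real.rpow_mul hx.le,
      Real.rpow_neg hP.le, Real.rpow_two]
  have hse : s ^ (2 / (n : ℝ) - 2) ≤ K ^ (2 / (n : ℝ) - 2) / P ^ 2 := by
    calc s ^ (2 / (n : ℝ) - 2) ≤ (K * x) ^ (2 / (n : ℝ) - 2) :=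
          Real.rpow_le_rpow_of_nonpos (by positivity) hs he
      _ = K ^ (2 / (n : ℝ) - 2) / P ^ 2 := by
          rw [Real.mul_rpow hK.le hx.le, hxe, ← div_eq_mul_inv]
  have hKe : 0 ≤ K ^ (2 / (n : ℝ) - 2) := Real.rpow_nonneg hK.le _
  have hP2 : 1 ≤ 1 / P ^ 2 := by
    rw [le_div_iff₀ (by positivity), one_mul]
    exact pow_le_one₀ hP.le hP1
  calc √(1 + s ^ (2 / (n : ℝ) - 2) * W ^ 2)
      ≤ √((1 + K ^ (2 / (n : ℝ) - 2) * c ^ 2) / P ^ 2) := by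
        apply Real.sqrt_le_sqrt
        have := mul_le_mul hse hW (sq_nonneg W) (by positivity)
        rw [show (1 + K ^ (2 / (n : ℝ) - 2) * c ^ 2) / P ^ 2
          = 1 / P ^ 2 + K ^ (2 / (n : ℝ) - 2) / P ^ 2 * c ^ 2 by ring]
        linarith
    _ = √(1 + K ^ (2 / (n : ℝ) - 2) * c ^ 2) / P := by
        rw [Real.sqrt_div' _ (by positivity), Real.sqrt_sq hP.le]

theorem omegaN_pos {n : ℕ} (hn : 0 < n) : 0 < omegaN n :=
  mul_pos (Nat.cast_pos.2 hn) <| ENNReal.toReal_pos (Metric.measure_ball_pos _ _ one_pos).ne'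
    MeasureTheory.measure_ball_lt_top.ne

theorem aL_nonneg {l : ℝ} (hl : 0 ≤ l) : 0 ≤ aL l :=
  div_nonneg (sq_nonneg _) (by positivity)

theorem bL_nonneg {l : ℝ} (hl : 1 / 3 ≤ l) : 0 ≤ bL l :=
  div_nonneg (by linarith) (by linarith)

theorem aL_add_bL {l : ℝ} (hl : l ≠ 0) : aL l + bL l = (l + 1) / 2 := by
  unfold aL bL
  field_simp
  ring

theorem Pop_affine {n : ℕ} {χ p q μ : ℝ} {D E : ℝ → ℝ} {D' E' t : ℝ}
    (hD : HasDerivAt D D' t) (hE : HasDerivAt E E' t) (s : ℝ) :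
    Pop n χ p q μ (fun σ τ => D τ * σ + E τ) s t =
      D' * s + E' - (n : ℝ) ^ q * χ * ((D t * s + E t - μ / n * s) * D t ^ q)
        / √(1 + s ^ (2 / (n : ℝ) - 2) * (D t * s + E t - μ / n * s) ^ 2) := by
  have hs : deriv (fun σ => D t * σ + E t) = fun _ => D t := by
    funext σ
    simp
  have ht : HasDerivAt (fun τ => D τ * s + E τ) (D' * s + E') t := (hD.mul_const s).add hE
  rw [Pop, hs, ht.deriv, deriv_const]
  simp

theorem Pop_pivot {n : ℕ} {χ p q μ c ρ : ℝ} {D : ℝ → ℝ} {D' t : ℝ} (hρ : ρ ≠ 0)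
    (hμ : μ / n = c / ρ) (hD : HasDerivAt D D' t) (s : ℝ) :
    Pop n χ p q μ (fun σ τ => D τ * σ + (c - ρ * D τ)) s t =
      (ρ - s) * (-D' - (n : ℝ) ^ q * χ * ((c / ρ - D t) * D t ^ q)
        / √(1 + s ^ (2 / (n : ℝ) - 2) * ((ρ - s) * (c / ρ - D t)) ^ 2)) := by
  have hw : D t * s + (c - ρ * D t) - μ / n * s = (ρ - s) * (c / ρ - D t) := by
    rw [hμ]
    field_simp
    ring
  have hE : HasDerivAt (fun τ => c - ρ * D τ) (0 - ρ * D') t :=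
    (hasDerivAt_const t c).sub (hD.const_mul ρ)
  rw [Pop_affine hD hE, hw]
  ring

section Nf

variable {l R K : ℝ} {n : ℕ} {B : ℝ → ℝ} {t : ℝ}

theorem hasDerivAt_Nf {B' : ℝ} (hB : HasDerivAt B B' t) (hBt : 0 < B t) :
    HasDerivAt (Nf l R K n B) (-(aL l + bL l) * (K / √(B t) - bL l) * B') t := by
  have h := ((hB.sqrt hBt.ne').const_mul (2 * K)).sub (hB.const_mul (bL l))
    |>.const_mul (aL l + bL l) |>.const_sub (K ^ 2 + aL l * R ^ n)
  refine h.congr_deriv ?_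
  have : √(B t) ≠ 0 := (Real.sqrt_pos.2 hBt).ne'
  field_simp

theorem hasDerivAt_Df {m ωn N' : ℝ} (hN : HasDerivAt (Nf l R K n B) N' t)
    (hN0 : Nf l R K n B t ≠ 0) :
    HasDerivAt (Df m ωn l R K n B) (-(m / ωn * aL l * N' / Nf l R K n B t ^ 2)) t := by
  have h := (hasDerivAt_const t (m / ωn * aL l)).div hN hN0
  refine h.congr_deriv ?_
  ring

theorem Nf_le (hl : 1 / 3 ≤ l) (hBt : 0 ≤ B t) (hsmall : bL l * √(B t) ≤ 2 * K) :
    Nf l R K n B t ≤ K ^ 2 + aL l * R ^ n := by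
  have hab : 0 ≤ aL l + bL l := add_nonneg (aL_nonneg (by linarith)) (bL_nonneg hl)
  have hx := Real.sqrt_nonneg (B t)
  have : bL l * B t ≤ 2 * K * √(B t) := by
    calc bL l * B t = bL l * √(B t) * √(B t) := by rw [mul_assoc, Real.mul_self_sqrt hBt]
      _ ≤ 2 * K * √(B t) := mul_le_mul_of_nonneg_right hsmall hx
  unfold Nf
  nlinarith

theorem le_Nf (hl : 1 / 3 ≤ l) (hBt : 0 ≤ B t) (hsmall : 4 * (aL l + bL l) * √(B t) ≤ K) :
    K ^ 2 / 2 + aL l * R ^ n ≤ Nf l R K n B t := by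
  have hab : 0 ≤ aL l + bL l := add_nonneg (aL_nonneg (by linarith)) (bL_nonneg hl)
  have hx := Real.sqrt_nonneg (B t)
  have hbB : 0 ≤ bL l * B t := mul_nonneg (bL_nonneg hl) hBt
  have hK : 0 ≤ K := le_trans (by positivity) hsmall
  unfold Nf
  nlinarith

end Nf

/- With `c = m/ω_n`, `a = a_λ`, `b = b_λ`, `ρ = Rⁿ`, `x = √B`, `P = x^(1-1/n)` and `D = ca/N`,
the left side is `-D'` and the right side is the taxis term of `𝒫 w_out`, whose square root `S`
is at most `M/P` and in which `G = c/ρ - D`. -/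
theorem neg_deriv_le_taxis_term {a b c K ρ N x P M G S ν q B' : ℝ} (ha : 0 ≤ a) (hb : 0 ≤ b)
    (hab : 0 < a + b) (hc : 0 < c) (hK : 0 < K) (hρ : 0 < ρ) (hx : 0 < x) (hbx : b * x ≤ K)
    (hN : 0 < N) (hNle : N ≤ K ^ 2 + a * ρ) (hq : 1 ≤ q) (hν : 0 ≤ ν) (hP : 0 < P) (hM : 0 < M)
    (hS : 0 < S) (hSle : S ≤ M / P) (hG : c * K ^ 2 / (2 * ρ * N) ≤ G)
    (hB' : -(ν * a ^ (q - 1) * c ^ q * K / (2 * (a + b) * (K ^ 2 + a * ρ) ^ (q - 1) * ρ * M))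
      * (x * P) ≤ B') :
    c * a * (-(a + b) * (K / x - b) * B') / N ^ 2 ≤ ν * (G * (c * a / N) ^ q) / S := by
  set Γ := ν * a ^ (q - 1) * c ^ q * K / (2 * (a + b) * (K ^ 2 + a * ρ) ^ (q - 1) * ρ * M)
  have hΓ : 0 ≤ Γ := by positivity
  have hG0 : 0 ≤ G := le_trans (by positivity) hG
  have hbK : 0 ≤ K / x - b := by rw [sub_nonneg, le_div_iff₀ hx]; exact hbx
  have hcaq : (c * a) ^ q = c ^ q * (a * a ^ (q - 1)) := by
    rw [Real.mul_rpow hc.le ha, ← Real.rpow_one_add' ha (by linarith), add_sub_cancel]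
  have hNq : N ^ q = N ^ (q - 1) * N := by
    rw [Real.rpow_sub_one hN.ne', div_mul_cancel₀ _ hN.ne']
  have hrate : (K / x - b) * -B' ≤ K / x * (Γ * (x * P)) :=
    calc (K / x - b) * -B' ≤ (K / x - b) * (Γ * (x * P)) := by gcongr; linarith
      _ ≤ K / x * (Γ * (x * P)) := by gcongr; linarith
  calc c * a * (-(a + b) * (K / x - b) * B') / N ^ 2
      = c * a * (a + b) * ((K / x - b) * -B') / N ^ 2 := by ring
    _ ≤ c * a * (a + b) * (K / x * (Γ * (x * P))) / N ^ 2 := by gcongr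
    _ = ν * (c * K ^ 2 / (2 * ρ * M)) * (c * a) ^ q * P
          / ((K ^ 2 + a * ρ) ^ (q - 1) * N ^ 2) := by
        rw [hcaq]
        simp only [Γ]
        field_simp
    _ ≤ ν * (c * K ^ 2 / (2 * ρ * M)) * (c * a) ^ q * P / (N ^ (q - 1) * N ^ 2) := by
        gcongr
    _ = ν * (c * K ^ 2 / (2 * ρ * N) * (c * a / N) ^ q) / (M / P) := by
        rw [Real.div_rpow (by positivity) hN.le, hNq]
        field_simp
    _ ≤ ν * (G * (c * a / N) ^ q) / S := by gcongr

theorem Pop_outer_nonpos {n : ℕ} (hn : 0 < n) {χ p q m l K R : ℝ} (hχ : 0 ≤ χ)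
    (hq : 1 ≤ q) (hm : 0 < m) (hl : l ∈ Set.Icc (1/3 : ℝ) 1) (hK : 0 < K) {B : ℝ → ℝ}
    {B' t s : ℝ} (hB : HasDerivAt B B' t) (hBt : 0 < B t) (hB1 : B t ≤ 1)
    (hBK : B t ≤ K ^ 2 / (16 * (aL l + bL l) ^ 2))
    (hB' : B' ≥ -(aL l ^ (q - 1) * ((n : ℝ) * m) ^ q * χ * K
          / (2 * (aL l + bL l) * (K ^ 2 + aL l * R ^ n) ^ (q - 1) * (omegaN n) ^ q * R ^ n
            * Real.sqrt (1 + K ^ (2 / (n : ℝ) - 2) * m ^ 2 / (omegaN n) ^ 2)))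
        * (B t) ^ (1 - 1 / (2 * (n : ℝ))))
    (hs : s ∈ Set.Ioo (K * Real.sqrt (B t)) (R ^ n)) :
    Pop n χ p q ((m * n) / (omegaN n * R ^ n))
      (fun σ τ => Df m (omegaN n) l R K n B τ * σ + Ef m (omegaN n) l R K n B τ) s t ≤ 0 := by
  have hω := omegaN_pos hn
  have hc : 0 < m / omegaN n := div_pos hm hω
  have ha := aL_nonneg (by linarith [hl.1] : 0 ≤ l)
  have hb := bL_nonneg hl.1
  have hab : 0 < aL l + bL l := by rw [aL_add_bL (by linarith [hl.1])]; linarith [hl.1]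
  have hx : 0 < √(B t) := Real.sqrt_pos.2 hBt
  have hsmall := four_mul_sqrt_le hab hK.le hBK
  have hs0 : 0 < s := lt_trans (by positivity) hs.1
  have hρ : 0 < R ^ n := hs0.trans hs.2
  have hNlo := le_Nf (R := R) (n := n) hl.1 hBt.le hsmall
  have hNhi := Nf_le (R := R) (K := K) (n := n) hl.1 hBt.le (by nlinarith)
  have hN : 0 < Nf l R K n B t := by nlinarith
  have hD := hasDerivAt_Df (m := m) (ωn := omegaN n) (hasDerivAt_Nf (l := l) (R := R) (K := K)
    (n := n) hB hBt) hN.ne'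
  have hμ : m * n / (omegaN n * R ^ n) / n = m / omegaN n / R ^ n := by field_simp
  rw [show Ef m (omegaN n) l R K n B = fun τ => m / omegaN n - R ^ n * Df m (omegaN n) l R K n B τ
    from rfl, Pop_pivot hρ.ne' hμ hD]
  refine mul_nonpos_of_nonneg_of_nonpos (sub_nonneg.2 hs.2.le) (sub_nonpos.2 ?_)
  rw [neg_neg, show Df m (omegaN n) l R K n B t = m / omegaN n * aL l / Nf l R K n B t from rfl]
  have hG := le_div_sub_mul_div hc.le hρ hN hNlo
  refine neg_deriv_le_taxis_term ha hb hab hc hK hρ hx (by nlinarith) hN hNhi hq (by positivity)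
    (Real.rpow_pos_of_pos hx _) (Real.sqrt_pos.2 (by positivity)) (Real.sqrt_pos.2 (by positivity))
    (sqrt_one_add_rpow_mul_sq_le hn hx (Real.sqrt_le_one.2 hB1) hK hs.1.le
      (sq_mul_sub_le_sq hρ hs0.le hs.2.le (by positivity) (le_trans (by positivity) hG))) hG ?_
  rw [ge_iff_le, rpow_eq_sqrt_mul_sqrt_rpow hBt] at hB'
  convert hB' using 3
  rw [Real.div_rpow hm.le hω.le, Real.mul_rpow (Nat.cast_nonneg n) hm.le, div_pow, mul_div_assoc]
  field_simp

theorem stmt7_general (n : ℕ) (hn : 0 < n) (R χ p q m l K T B0 : ℝ) (hχ : 0 < χ)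
    (hq : 1 ≤ q) (hm : 0 < m) (hl : l ∈ Set.Icc (1/3 : ℝ) 1) (hK : 0 < K)
    (hB0 : B0 ∈ Set.Ioo (0 : ℝ) 1)
    (hB0le : B0 ≤ K ^ 2 / (16 * (aL l + bL l) ^ 2))
    (B B' : ℝ → ℝ)
    (hB : ∀ t ∈ Set.Ico (0 : ℝ) T, HasDerivAt B (B' t) t)
    (hBpos : ∀ t ∈ Set.Ico (0 : ℝ) T, 0 < B t)
    (hBanti : AntitoneOn B (Set.Ico 0 T))
    (hBinit : B 0 ≤ B0)
    (hB' : ∀ t ∈ Set.Ioo (0 : ℝ) T,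
      B' t ≥ -(aL l ^ (q - 1) * ((n : ℝ) * m) ^ q * χ * K
          / (2 * (aL l + bL l) * (K ^ 2 + aL l * R ^ n) ^ (q - 1) * (omegaN n) ^ q * R ^ n
            * Real.sqrt (1 + K ^ (2 / (n : ℝ) - 2) * m ^ 2 / (omegaN n) ^ 2)))
        * (B t) ^ (1 - 1 / (2 * (n : ℝ)))) :
    ∀ t ∈ Set.Ioo (0 : ℝ) T, ∀ s ∈ Set.Ioo (K * Real.sqrt (B t)) (R ^ n),
      Pop n χ p q ((m * n) / (omegaN n * R ^ n))
        (fun σ τ => Df m (omegaN n) l R K n B τ * σ + Ef m (omegaN n) l R K n B τ) s t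
        ≤ 0 := by
  intro t ht s hs
  have htT : t ∈ Ico 0 T := Ioo_subset_Ico_self ht
  have hBB0 : B t ≤ B0 := (hBanti ⟨le_rfl, ht.1.trans ht.2⟩ htT ht.1.le).trans hBinit
  exact Pop_outer_nonpos hn hχ.le hq hm hl hK (hB t htT) (hBpos t htT)
    (hBB0.trans hB0.2.le) (hBB0.trans hB0le) (hB' t ht) hs

/-- Outer region: under the stated smallness and differential-inequality
conditions on `B`, the outer comparison function `w_out(s,t) = D(t)s + E(t)` satisfies
`(𝒫 w_out)(s,t) ≤ 0` for `t ∈ (0,T)` and `s ∈ (K√B(t), Rⁿ)`. -/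
theorem stmt7 (n : ℕ) (hn : 0 < n) (R χ p q m l K T B0 : ℝ) (hR : 0 < R) (hχ : 0 < χ)
    (hp : 1 ≤ p) (hq : 1 ≤ q) (hm : 0 < m) (hl : l ∈ Set.Icc (1/3 : ℝ) 1) (hK : 0 < K)
    (hT : 0 < T) (hB0 : B0 ∈ Set.Ioo (0 : ℝ) 1) (hB0R : K * Real.sqrt B0 < R ^ n)
    (hB0le : B0 ≤ K ^ 2 / (16 * (aL l + bL l) ^ 2))
    (B B' : ℝ → ℝ)
    (hB : ∀ t ∈ Set.Ico (0 : ℝ) T, HasDerivAt B (B' t) t)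
    (hB'c : ContinuousOn B' (Set.Ico 0 T))
    (hBpos : ∀ t ∈ Set.Ico (0 : ℝ) T, 0 < B t)
    (hBanti : AntitoneOn B (Set.Ico 0 T))
    (hBinit : B 0 ≤ B0)
    (hB' : ∀ t ∈ Set.Ioo (0 : ℝ) T,
      B' t ≥ -(aL l ^ (q - 1) * ((n : ℝ) * m) ^ q * χ * K
          / (2 * (aL l + bL l) * (K ^ 2 + aL l * R ^ n) ^ (q - 1) * (omegaN n) ^ q * R ^ n
            * Real.sqrt (1 + K ^ (2 / (n : ℝ) - 2) * m ^ 2 / (omegaN n) ^ 2)))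
        * (B t) ^ (1 - 1 / (2 * (n : ℝ)))) :
    ∀ t ∈ Set.Ioo (0 : ℝ) T, ∀ s ∈ Set.Ioo (K * Real.sqrt (B t)) (R ^ n),
      Pop n χ p q ((m * n) / (omegaN n * R ^ n))
        (fun σ τ => Df m (omegaN n) l R K n B τ * σ + Ef m (omegaN n) l R K n B τ) s t
        ≤ 0 :=
  stmt7_general n hn R χ p q m l K T B0 hχ hq hm hl hK hB0 hB0le B B' hB hBpos hBanti hBinit hB'
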